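/- arXiv:1509.07552 — 5 statements merged into one kernel-verified Lean document; each statement's English description precedes it below -/
import Mathlib

section
/- Under the hypotheses of the previous statement, the family of sets P_{n₀} = { n : n₀ ⤳* n } indexed by initiation nodes n₀ ∈ I forms a partition of the set of all state-synchronization nodes I ∪ T ∪ O. -/
/-- The sets `P n₀ = {n | n₀ ⤳* n}` for initiation nodes `n₀ ∈ I`
form a partition of the set of state-synchronization nodes `I ∪ T ∪ O`. -/
theorem stmt_3 {V : Type*} [Fintype V] (lead : V → V → Prop)
    (I T O : Set V)
    (huniq : ∀ n ∈ T ∪ O, ∃! m, lead m n)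
    (hinit : ∀ n ∈ I, ¬ ∃ m, lead m n)
    (hacyc : Irreflexive (Relation.TransGen lead))
    (hsrc : ∀ m n, lead m n → m ∈ I ∪ T)
    (htgt : ∀ m n, lead m n → n ∈ T ∪ O) :
    (⋃ n₀ ∈ I, {n | Relation.ReflTransGen lead n₀ n}) = I ∪ T ∪ O ∧
    (∀ n₀ ∈ I, ∀ n₁ ∈ I, n₀ ≠ n₁ →
      {n | Relation.ReflTransGen lead n₀ n} ∩
        {n | Relation.ReflTransGen lead n₁ n} = ∅) := by
  haveI : IsIrrefl V (Relation.TransGen lead) := ⟨hacyc⟩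
  haveI : IsTrans V (Relation.TransGen lead) :=
    ⟨fun _ _ _ h₁ h₂ => Relation.TransGen.trans h₁ h₂⟩
  have hwf : WellFounded (Relation.TransGen lead) :=
    Finite.wellFounded_of_trans_of_irrefl _
  have hwf' : WellFounded lead := Subrelation.wf (fun h => Relation.TransGen.single h) hwf
  -- uniqueness of the initiation node reaching a given node
  have key : ∀ a ∈ I, ∀ b ∈ I, ∀ n, Relation.ReflTransGen lead a n →
      Relation.ReflTransGen lead b n → a = b := by
    intro a ha b hb n hab
    induction hab with
    | refl =>
      intro hba
      rcases hba.cases_tail with h | ⟨c, _, hc⟩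
      · exact h
      · exact absurd ⟨c, hc⟩ (hinit a ha)
    | @tail m n' ham hmn ih =>
      intro hbn
      rcases hbn.cases_tail with h | ⟨c, hbc, hcn⟩
      · exact absurd ⟨m, h ▸ hmn⟩ (hinit b hb)
      · have hc : c = m := by
          rcases huniq n' (htgt m n' hmn) with ⟨u, _, hu⟩
          exact (hu c hcn).trans (hu m hmn).symm
        exact ih (hc ▸ hbc)
  constructor
  · ext n
    simp only [Set.mem_iUnion, Set.mem_setOf_eq]
    constructor
    · rintro ⟨n₀, h₀, hr⟩
      rcases hr.cases_tail with h | ⟨c, _, hc⟩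
      · subst h; exact Or.inl (Or.inl h₀)
      · rcases htgt c n hc with h | h
        · exact Or.inl (Or.inr h)
        · exact Or.inr h
    · intro hn
      induction n using hwf'.induction with
      | _ n ih =>
        by_cases hI : n ∈ I
        · exact ⟨n, hI, Relation.ReflTransGen.refl⟩
        · have hTO : n ∈ T ∪ O := by
            rcases hn with (h | h) | h
            · exact absurd h hI
            · exact Or.inl h
            · exact Or.inr h
          rcases huniq n hTO with ⟨m, hm, _⟩
          have hmIT : m ∈ I ∪ T := hsrc m n hm
          rcases ih m hm (Set.mem_union_left _ hmIT) with ⟨n₀, h₀, hr⟩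
          exact ⟨n₀, h₀, hr.tail hm⟩
  · intro n₀ h₀ n₁ h₁ hne
    ext n
    simp only [Set.mem_inter_iff, Set.mem_setOf_eq, Set.mem_empty_iff_false, iff_false,
      not_and]
    intro h0 h1
    exact hne (key n₀ h₀ n₁ h₁ n h0 h1)
end

section
/- In a state-respecting bundle, within each partition class P_{n₀} (the nodes reachable via ⤳* from a fixed initiation node n₀), the initiation and transition nodes are linearly ordered by the transitive closure ⤳⁺. That is, for any two distinct nodes n₁, n₂ ∈ P_{n₀} ∩ (I ∪ T), either n₁ ⤳⁺ n₂ or n₂ ⤳⁺ n₁. -/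
open Relation

/-- Fork lemma: if `a` and `b` are both reachable from `p`, then either they are
comparable, or the paths split at some node `c` into distinct children. -/
lemma fork_lemma {V : Type*} (lead : V → V → Prop) (a : V) :
    ∀ p, ReflTransGen lead p a → ∀ b, ReflTransGen lead p b →
      ReflTransGen lead a b ∨ ReflTransGen lead b a ∨
      ∃ c c₁ c₂, lead c c₁ ∧ lead c c₂ ∧ c₁ ≠ c₂ ∧
        ReflTransGen lead c₁ a ∧ ReflTransGen lead c₂ b := by
  intro p hpa
  induction hpa using ReflTransGen.head_induction_on with
  | refl => intro b hab; exact Or.inl hab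
  | head hpc hca ih =>
    rename_i p c
    intro b hpb
    rcases hpb.cases_head with rfl | ⟨d, hpd, hdb⟩
    · exact Or.inr (Or.inl (ReflTransGen.head hpc hca))
    · by_cases hcd : c = d
      · subst hcd; exact ih b hdb
      · exact Or.inr (Or.inr ⟨p, c, d, hpc, hpd, hcd, hca, hdb⟩)

/-- In a state-respecting bundle, the initiation and transition
nodes within a partition class `P n₀` are linearly ordered by `⤳⁺`. -/
theorem stmt_4 {V : Type*} [Fintype V] (lead : V → V → Prop)
    (I T O : Set V)
    (huniq : ∀ n ∈ T ∪ O, ∃! m, lead m n)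
    (hinit : ∀ n ∈ I, ¬ ∃ m, lead m n)
    (hacyc : Irreflexive (Relation.TransGen lead))
    (hsrc : ∀ m n, lead m n → m ∈ I ∪ T)
    (htgt : ∀ m n, lead m n → n ∈ T ∪ O)
    (hNSS : ∀ n n₁ n₂, lead n n₁ → lead n n₂ → n₁ ∈ T → n₂ ∈ T → n₁ = n₂)
    (n₀ : V) (hn₀ : n₀ ∈ I) :
    ∀ n₁ n₂, Relation.ReflTransGen lead n₀ n₁ → Relation.ReflTransGen lead n₀ n₂ →
      n₁ ∈ I ∪ T → n₂ ∈ I ∪ T → n₁ ≠ n₂ →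
      Relation.TransGen lead n₁ n₂ ∨ Relation.TransGen lead n₂ n₁ := by
  -- helper: a node with a predecessor, which is in I ∪ T or leads somewhere, is in T
  have key : ∀ c c₁ n, lead c c₁ → n ∈ I ∪ T → ReflTransGen lead c₁ n → c₁ ∈ T := by
    intro c c₁ n hpred hnIT hc₁n
    rcases hc₁n.cases_head with rfl | ⟨x, hc₁x, _⟩
    · rcases hnIT with hI | hT
      · exact absurd ⟨c, hpred⟩ (hinit _ hI)
      · exact hT
    · rcases hsrc _ _ hc₁x with hI | hT
      · exact absurd ⟨c, hpred⟩ (hinit _ hI)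
      · exact hT
  intro n₁ n₂ h₁ h₂ hn₁ hn₂ hne
  rcases fork_lemma lead n₁ n₀ h₁ n₂ h₂ with h | h | ⟨c, c₁, c₂, hc₁, hc₂, hcne, ha, hb⟩
  · rcases (Relation.reflTransGen_iff_eq_or_transGen.mp h) with rfl | ht
    · exact absurd rfl hne
    · exact Or.inl ht
  · rcases (Relation.reflTransGen_iff_eq_or_transGen.mp h) with rfl | ht
    · exact absurd rfl hne.symm
    · exact Or.inr ht
  · exact absurd (hNSS c c₁ c₂ hc₁ hc₂ (key c c₁ n₁ hc₁ hn₁ ha) (key c c₂ n₂ hc₂ hn₂ hb)) hcne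
end

section
/- In an enriched bundle (with finite node set) that fails the No State Split Principle—i.e., there exist a node n and two distinct transition nodes n₁ ≠ n₂ with n ⤳ n₁ and n ⤳ n₂—the transition nodes reachable from the initiation node of n are not linearly ordered by ⤳⁺. -/
/-- In an enriched bundle failing the No State Split Principle,
the transition nodes reachable from the initiation node of the splitting node
are not linearly ordered by `⤳⁺`. -/
theorem stmt_5 {V : Type*} [Fintype V] (lead : V → V → Prop)
    (I T O : Set V)
    (huniq : ∀ n ∈ T ∪ O, ∃! m, lead m n)
    (hinit : ∀ n ∈ I, ¬ ∃ m, lead m n)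
    (hacyc : Irreflexive (Relation.TransGen lead))
    (hsrc : ∀ m n, lead m n → m ∈ I ∪ T)
    (htgt : ∀ m n, lead m n → n ∈ T ∪ O)
    (n n₁ n₂ : V) (h₁ : lead n n₁) (h₂ : lead n n₂)
    (ht₁ : n₁ ∈ T) (ht₂ : n₂ ∈ T) (hne : n₁ ≠ n₂)
    (n₀ : V) (hn₀I : n₀ ∈ I) (hreach : Relation.ReflTransGen lead n₀ n) :
    ¬ (∀ m₁ m₂, m₁ ∈ T → m₂ ∈ T →
        Relation.ReflTransGen lead n₀ m₁ → Relation.ReflTransGen lead n₀ m₂ →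
        m₁ ≠ m₂ → Relation.TransGen lead m₁ m₂ ∨ Relation.TransGen lead m₂ m₁) := by
  intro hlin
  have key : ∀ a b : V, lead n a → lead n b → ¬ Relation.TransGen lead a b := by
    intro a b ha hb htg
    obtain ⟨c, hc, hcb⟩ := Relation.TransGen.tail'_iff.mp htg
    have : c = n := (huniq b (htgt n b hb)).unique hcb hb
    subst this
    exact hacyc a (Relation.TransGen.tail' hc ha)
  have r₁ : Relation.ReflTransGen lead n₀ n₁ := hreach.tail h₁
  have r₂ : Relation.ReflTransGen lead n₀ n₂ := hreach.tail h₂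
  rcases hlin n₁ n₂ ht₁ ht₂ r₁ r₂ hne with h | h
  · exact key n₁ n₂ h₁ h₂ h
  · exact key n₂ n₁ h₂ h₁ h
end

section
/- In a state-respecting bundle, each partition class P_{n₀} admits an enumeration n₀, n₁, …, n_ℓ of all its nodes such that (a) the subsequence of initiation/transition nodes is exactly their ⤳⁺-linear order, and (b) the enumeration order extends the relation ≺⁺ restricted to P_{n₀}. -/
/-!
Two nodes reachable from `n₀` along `⤳` are either `⤳*`-comparable or their paths leave a
common node `m` through distinct successors. In the latter case both successors would be
transitions whenever the two nodes lie in `I ∪ T` (observations have no successors, and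
initiations no predecessors), which the No State Split Principle forbids. So the
initiation/transition nodes of `P n₀` form a `⤳*`-chain, and any enumeration of `P n₀` along a
linear extension of `≺⁺` lists this chain in order and starts with `n₀`.
-/

namespace Relation.ReflTransGen

variable {α : Type*} {r : α → α → Prop}

theorem total_or_diverge {a x y : α} (hax : ReflTransGen r a x) (hay : ReflTransGen r a y) :
    ReflTransGen r x y ∨ ReflTransGen r y x ∨
      ∃ m x' y', r m x' ∧ r m y' ∧ x' ≠ y' ∧ ReflTransGen r x' x ∧ ReflTransGen r y' y := by
  induction hax using Relation.ReflTransGen.head_induction_on generalizing y with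
  | refl => exact Or.inl hay
  | @head a c hac hcx ih =>
    rcases hay.cases_head with rfl | ⟨y₁, hay₁, hy₁y⟩
    · exact Or.inr (Or.inl (hcx.head hac))
    · by_cases hcy : c = y₁
      · subst hcy
        exact ih hy₁y
      · exact Or.inr (Or.inr ⟨a, c, y₁, hac, hay₁, hcy, hcx, hy₁y⟩)

end Relation.ReflTransGen

theorem Finset.exists_nodup_pairwise_not_swap {α : Type*} (p : α → α → Prop)
    [IsStrictOrder α p] (s : Finset α) :
    ∃ l : List α, l.Nodup ∧ (∀ x, x ∈ l ↔ x ∈ s) ∧ l.Pairwise (fun x y => ¬ p y x) := by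
  classical
  let := partialOrderOfSO p
  obtain ⟨r, hlin, hle⟩ := extend_partialOrder (α := α) (· ≤ ·)
  refine ⟨s.sort r, s.sort_nodup r, fun x => Finset.mem_sort r, ?_⟩
  refine ((s.pairwise_sort r).and (s.sort_nodup r)).imp ?_
  rintro x y ⟨hxy, hne⟩ hyx
  exact hne (antisymm hxy (hle y x (Or.inr hyx)))

theorem List.head?_eq_some_of_pairwise_not_swap {α : Type*} {p : α → α → Prop} {l : List α}
    {a : α} (hl : l.Pairwise (fun x y => ¬ p y x)) (ha : a ∈ l) (hmin : ∀ x ∈ l, x ≠ a → p a x) :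
    l.head? = some a := by
  cases l with
  | nil => cases ha
  | cons b t =>
    by_cases hba : b = a
    · rw [hba, List.head?_cons]
    · have hat : a ∈ t := (List.mem_cons.mp ha).resolve_left (Ne.symm hba)
      exact absurd (hmin b List.mem_cons_self hba) ((List.pairwise_cons.mp hl).1 a hat)

section NoStateSplit

variable {V : Type*} {lead : V → V → Prop} {I T : Set V}

theorem mem_of_lead_of_reflTransGen_mem_union (hinit : ∀ n ∈ I, ¬ ∃ m, lead m n)
    (hsrc : ∀ m n, lead m n → m ∈ I ∪ T) {m c z : V} (hmc : lead m c)
    (hcz : Relation.ReflTransGen lead c z) (hz : z ∈ I ∪ T) : c ∈ T := by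
  have hc : c ∈ I ∪ T := by
    rcases hcz.cases_head with rfl | ⟨w, hcw, _⟩
    · exact hz
    · exact hsrc c w hcw
  exact hc.resolve_left fun hcI => hinit c hcI ⟨m, hmc⟩

theorem reflTransGen_total_of_noStateSplit (hinit : ∀ n ∈ I, ¬ ∃ m, lead m n)
    (hsrc : ∀ m n, lead m n → m ∈ I ∪ T)
    (hNSS : ∀ n n₁ n₂, lead n n₁ → lead n n₂ → n₁ ∈ T → n₂ ∈ T → n₁ = n₂) {n₀ x y : V}
    (hx : Relation.ReflTransGen lead n₀ x) (hy : Relation.ReflTransGen lead n₀ y)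
    (hxIT : x ∈ I ∪ T) (hyIT : y ∈ I ∪ T) :
    Relation.ReflTransGen lead x y ∨ Relation.ReflTransGen lead y x := by
  rcases hx.total_or_diverge hy with h | h | ⟨m, x', y', hx', hy', hne, hx'x, hy'y⟩
  · exact Or.inl h
  · exact Or.inr h
  · exact absurd (hNSS m x' y' hx' hy'
      (mem_of_lead_of_reflTransGen_mem_union hinit hsrc hx' hx'x hxIT)
      (mem_of_lead_of_reflTransGen_mem_union hinit hsrc hy' hy'y hyIT)) hne

end NoStateSplit

theorem stmt_8_general {V : Type*} [Fintype V] (lead : V → V → Prop)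
    (I T : Set V)
    (hinit : ∀ n ∈ I, ¬ ∃ m, lead m n)
    (hsrc : ∀ m n, lead m n → m ∈ I ∪ T)
    (hNSS : ∀ n n₁ n₂, lead n n₁ → lead n n₂ → n₁ ∈ T → n₂ ∈ T → n₁ = n₂)
    -- `≺⁺`: the acyclic extension of the bundle order required by the
    -- Observation Ordering Principle
    (precP : V → V → Prop)
    (hPirr : Irreflexive precP) (hPtrans : Transitive precP)
    (hPlead : ∀ a b, lead a b → precP a b)
    (n₀ : V) :
    ∃ l : List V, l.Nodup ∧
      (∀ x, x ∈ l ↔ Relation.ReflTransGen lead n₀ x) ∧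
      l.head? = some n₀ ∧
      -- (a) earlier initiation/transition nodes `⤳⁺`-precede later ones
      l.Pairwise (fun x y => x ∈ I ∪ T → y ∈ I ∪ T → Relation.TransGen lead x y) ∧
      -- (b) the enumeration extends `≺⁺` on `P n₀`
      l.Pairwise (fun x y => ¬ precP y x) := by
  classical
  have : IsStrictOrder V precP := { irrefl := hPirr, trans := @hPtrans }
  have hprec : ∀ {a b}, Relation.TransGen lead a b → precP a b := fun h =>
    Relation.transGen_eq_self (r := precP) ▸ Relation.TransGen.mono hPlead _ _ h
  obtain ⟨l, hnodup, hmem, hext⟩ :=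
    (Finset.univ.filter (Relation.ReflTransGen lead n₀)).exists_nodup_pairwise_not_swap precP
  simp only [Finset.mem_filter, Finset.mem_univ, true_and] at hmem
  refine ⟨l, hnodup, hmem, ?_, ?_, hext⟩
  · refine List.head?_eq_some_of_pairwise_not_swap hext ((hmem n₀).2 .refl) fun x hx hne => ?_
    exact hprec ((Relation.reflTransGen_iff_eq_or_transGen.mp ((hmem x).1 hx)).resolve_left hne)
  · refine (hext.and hnodup).imp_of_mem ?_
    rintro x y hx hy ⟨hyx, hne⟩ hxIT hyIT
    rcases reflTransGen_total_of_noStateSplit hinit hsrc hNSS ((hmem x).1 hx) ((hmem y).1 hy)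
      hxIT hyIT with hxy | hyx'
    · exact (Relation.reflTransGen_iff_eq_or_transGen.mp hxy).resolve_left (Ne.symm hne)
    · exact absurd (hprec ((Relation.reflTransGen_iff_eq_or_transGen.mp hyx').resolve_left hne)) hyx

/-- In a state-respecting bundle, each partition class `P n₀`
admits an enumeration `n₀, n₁, …, n_ℓ` of all its nodes such that (a) the
subsequence of initiation/transition nodes is exactly their `⤳⁺`-linear
order, and (b) the enumeration order extends `≺⁺` restricted to `P n₀`. -/
theorem stmt_8 {V : Type*} [Fintype V] (lead : V → V → Prop)
    (I T O : Set V)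
    (huniq : ∀ n ∈ T ∪ O, ∃! m, lead m n)
    (hinit : ∀ n ∈ I, ¬ ∃ m, lead m n)
    (hsrc : ∀ m n, lead m n → m ∈ I ∪ T)
    (htgt : ∀ m n, lead m n → n ∈ T ∪ O)
    (hNSS : ∀ n n₁ n₂, lead n n₁ → lead n n₂ → n₁ ∈ T → n₂ ∈ T → n₁ = n₂)
    -- `≺⁺`: the acyclic extension of the bundle order required by the
    -- Observation Ordering Principle
    (precP : V → V → Prop)
    (hPirr : Irreflexive precP) (hPtrans : Transitive precP)
    (hPlead : ∀ a b, lead a b → precP a b)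
    (hOOP : ∀ n no nt, lead n no → lead n nt → no ∈ O → nt ∈ T → precP no nt)
    (n₀ : V) (hn₀ : n₀ ∈ I) :
    ∃ l : List V, l.Nodup ∧
      (∀ x, x ∈ l ↔ Relation.ReflTransGen lead n₀ x) ∧
      l.head? = some n₀ ∧
      -- (a) earlier initiation/transition nodes `⤳⁺`-precede later ones
      l.Pairwise (fun x y => x ∈ I ∪ T → y ∈ I ∪ T → Relation.TransGen lead x y) ∧
      -- (b) the enumeration extends `≺⁺` on `P n₀`
      l.Pairwise (fun x y => ¬ precP y x) :=
  stmt_8_general lead I T hinit hsrc hNSS precP hPirr hPtrans hPlead n₀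
end

section
/- Let ⤳ be a relation on a finite set N with designated disjoint subsets I, T, O covering N, satisfying the enriched-bundle conditions and the No State Split Principle, and suppose additionally that each node carries a pre-state and/or post-state in a set St with: initiation and transition nodes have a post-state, transition and observation nodes have a pre-state, and n₁ ⤳ n₂ implies post(n₁) = pre(n₂). Then along any maximal ⤳⁺-chain of initiation/transition nodes n₀ ⤳⁺ n₁ ⤳⁺ … ⤳⁺ n_k within one partition class, the sequence post(n₀), post(n₁), …, post(n_k) satisfies pre(n_{j+1}) = post(n_j) for all j, hence determines a computation under the transition relation ▷ = { (pre(n), post(n)) : n ∈ T }. -/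
/-! Every node after the head of a `⤳`-chain has a `⤳`-predecessor, so it is not an initiation
node and hence a transition node `n`; since states match along `⤳`, the step from the
post-state of its predecessor to `post n` is the `▷`-step `(pre n, post n)`. -/

theorem List.IsChain.and_mem_right_of_mem_union {V : Type*} {lead : V → V → Prop} {I T : Set V}
    (hinit : ∀ n ∈ I, ¬ ∃ m, lead m n) {ns : List V} (hIT : ∀ n ∈ ns, n ∈ I ∪ T)
    (hchain : ns.IsChain lead) : ns.IsChain fun a b => lead a b ∧ b ∈ T :=
  hchain.imp_of_mem_imp fun a b _ hb hab =>
    ⟨hab, (hIT b hb).resolve_left fun hbI => hinit b hbI ⟨a, hab⟩⟩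

theorem stmt_11_general {V St : Type*} (lead : V → V → Prop)
    (I T : Set V)
    (hinit : ∀ n ∈ I, ¬ ∃ m, lead m n)
    -- pre- and post-states carried by the nodes
    (pre post : V → St)
    (hmatch : ∀ n₁ n₂, lead n₁ n₂ → post n₁ = pre n₂)
    -- a chain of initiation/transition nodes within the class of `n₀`
    (ns : List V)
    (hchain : ns.Chain' lead)
    (hIT : ∀ n ∈ ns, n ∈ I ∪ T) :
    ns.Chain' (fun a b => pre b = post a) ∧
    (ns.map post).Chain' (fun s t => ∃ n ∈ T, pre n = s ∧ post n = t) :=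
  ⟨hchain.imp fun a b hab => (hmatch a b hab).symm,
    List.isChain_map_of_isChain post (fun a b ⟨hab, hbT⟩ => ⟨b, hbT, (hmatch a b hab).symm, rfl⟩)
      (hchain.and_mem_right_of_mem_union hinit hIT)⟩

/-- Along any maximal `⤳`-chain of initiation/transition nodes
within one partition class of a state-respecting bundle, the pre-state of each
node equals the post-state of its predecessor, and the sequence of post-states
is a computation under `▷ = {(pre n, post n) : n ∈ T}`. -/
theorem stmt_11 {V St : Type*} [Fintype V] (lead : V → V → Prop)
    (I T O : Set V)
    (huniq : ∀ n ∈ T ∪ O, ∃! m, lead m n)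
    (hinit : ∀ n ∈ I, ¬ ∃ m, lead m n)
    (hacyc : Irreflexive (Relation.TransGen lead))
    (hsrc : ∀ m n, lead m n → m ∈ I ∪ T)
    (htgt : ∀ m n, lead m n → n ∈ T ∪ O)
    (hNSS : ∀ n n₁ n₂, lead n n₁ → lead n n₂ → n₁ ∈ T → n₂ ∈ T → n₁ = n₂)
    -- pre- and post-states carried by the nodes
    (pre post : V → St)
    (hmatch : ∀ n₁ n₂, lead n₁ n₂ → post n₁ = pre n₂)
    -- a chain of initiation/transition nodes within the class of `n₀`
    (n₀ : V) (hn₀ : n₀ ∈ I)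
    (ns : List V) (hhead : ns.head? = some n₀)
    (hchain : ns.Chain' lead)
    (hIT : ∀ n ∈ ns, n ∈ I ∪ T)
    (hclass : ∀ n ∈ ns, Relation.ReflTransGen lead n₀ n) :
    ns.Chain' (fun a b => pre b = post a) ∧
    (ns.map post).Chain' (fun s t => ∃ n ∈ T, pre n = s ∧ post n = t) :=
  stmt_11_general lead I T hinit pre post hmatch ns hchain hIT
end
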